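/- arXiv:0910.2184 — 2 statements merged into one kernel-verified Lean document; each statement's English description precedes it below -/
import Mathlib

section
/- Let ξ : [0,∞) → ℝ be twice differentiable with ξ(0)=0, ξ'(0)=v₀>0, and suppose sup_{t≥0} |ξ''(t)| < A and ξ'(t) > v₀/2 for all t ≥ 0. Consider a fluid particle x : ℝ → ℝ³ satisfying x''(t) = -∇Ψ(|x(t) - (ξ(t),0,0)|), where Ψ is C¹ with Ψ(r)=0 for r > r₀ and B = sup_r |Ψ'(r)| < ∞. If the particle is at rest before the interaction begins at time τ (so x'(τ) relative to the body is -(ξ'(τ),0,0) in the body frame) and the interaction lasts for a duration δ (i.e. |x(t)-(ξ(t),0,0)| ≤ r₀ exactly for t ∈ [τ, τ+δ]), then δ ≤ 4r₀ / (ξ'(τ) - 2δ(A+B)) whenever ξ'(τ) > 2δ(A+B). -/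
open MeasureTheory Set

noncomputable def body (ξ : ℝ → ℝ) (t : ℝ) : EuclideanSpace ℝ (Fin 3) :=
  (WithLp.equiv 2 (Fin 3 → ℝ)).symm ![ξ t, 0, 0]

/-! The first coordinate `g` of the particle's position relative to the body satisfies `|g| ≤ r₀`
during the collision, starts with velocity `-ξ'(τ)` (the particle is at rest), and has acceleration
at most `A + B` (body acceleration plus the bounded interaction force). Comparing `g` with the
parabola `g(τ) - ξ'(τ) s + (A + B) s² / 2` shows that the particle cannot stay within `r₀` of the
body for a time `δ` unless `δ (ξ'(τ) - (A + B) δ / 2) ≤ 2 r₀`, which implies the stated bound. -/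

theorem image_le_quadratic_of_deriv_deriv_le {g g' g'' : ℝ → ℝ} {a b K : ℝ}
    (hg : ∀ t ∈ Icc a b, HasDerivAt g (g' t) t) (hg' : ∀ t ∈ Icc a b, HasDerivAt g' (g'' t) t)
    (hK : ∀ t ∈ Icc a b, g'' t ≤ K) :
    ∀ t ∈ Icc a b, g t ≤ g a + g' a * (t - a) + K / 2 * (t - a) ^ 2 := by
  have hg'_le : ∀ t ∈ Icc a b, g' t ≤ g' a + K * (t - a) := by
    refine image_le_of_deriv_right_le_deriv_boundary
      (fun t ht => (hg' t ht).continuousAt.continuousWithinAt)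
      (fun t ht => (hg' t (Ico_subset_Icc_self ht)).hasDerivWithinAt) (by simp)
      (by fun_prop) (fun t _ => ?_) (fun t ht => hK t (Ico_subset_Icc_self ht))
    simpa using ((hasDerivAt_id' t).sub_const a).const_mul K |>.const_add (g' a) |>.hasDerivWithinAt
  refine image_le_of_deriv_right_le_deriv_boundary
    (fun t ht => (hg t ht).continuousAt.continuousWithinAt)
    (fun t ht => (hg t (Ico_subset_Icc_self ht)).hasDerivWithinAt) (by simp)
    (by fun_prop) (fun t _ => ?_) (fun t ht => hg'_le t (Ico_subset_Icc_self ht))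
  have h := (hasDerivAt_id' t).sub_const a
  refine HasDerivAt.hasDerivWithinAt ?_
  exact (((h.const_mul (g' a)).const_add (g a)).fun_add
    ((h.fun_pow 2).const_mul (K / 2))).congr_deriv (by push_cast; ring)

theorem norm_central_force_le {E : Type*} [NormedAddCommGroup E] [NormedSpace ℝ E]
    {Ψ' : ℝ → ℝ} {B : ℝ} (hB : ∀ r, |Ψ' r| ≤ B) (v : E) : ‖(-(Ψ' ‖v‖ / ‖v‖)) • v‖ ≤ B := by
  rw [norm_smul, norm_neg, Real.norm_eq_abs, abs_div, abs_norm]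
  rcases eq_or_ne ‖v‖ 0 with hv | hv
  · simpa [hv] using (abs_nonneg _).trans (hB 0)
  · rw [div_mul_cancel₀ _ hv]
    exact hB _

theorem HasDerivAt.euclideanSpace_apply {n : ℕ} {f : ℝ → EuclideanSpace ℝ (Fin n)}
    {f' : EuclideanSpace ℝ (Fin n)} {t : ℝ} (hf : HasDerivAt f f' t) (i : Fin n) :
    HasDerivAt (fun s => f s i) (f' i) t :=
  (EuclideanSpace.proj (𝕜 := ℝ) i).hasFDerivAt.comp_hasDerivAt t hf

theorem EuclideanSpace.abs_apply_le_norm {ι : Type*} [Fintype ι] (v : EuclideanSpace ℝ ι) (i : ι) :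
    |v i| ≤ ‖v‖ := by
  simpa using PiLp.norm_apply_le v i

theorem sub_body_apply_zero (x : EuclideanSpace ℝ (Fin 3)) (ξ : ℝ → ℝ) (t : ℝ) :
    (x - body ξ t) 0 = x 0 - ξ t := rfl

theorem collision_duration_implicit_bound_general
    (ξ : ℝ → ℝ) (x : ℝ → EuclideanSpace ℝ (Fin 3)) (Ψ : ℝ → ℝ)
    (A B r₀ τ δ : ℝ)
    (hδ : 0 < δ) (hτ : 0 ≤ τ)
    (hξC2 : ContDiff ℝ 2 ξ) (hxC2 : ContDiff ℝ 2 x)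
    (hA : ∀ t ≥ (0:ℝ), |deriv (deriv ξ) t| < A)
    (hB : ∀ r, |deriv Ψ r| ≤ B)
    (hODE : ∀ t, deriv (deriv x) t =
      -(deriv Ψ (‖x t - body ξ t‖) / ‖x t - body ξ t‖) • (x t - body ξ t))
    (hrest : deriv x τ = 0)
    (hcoll : ∀ t, ‖x t - body ξ t‖ ≤ r₀ ↔ t ∈ Icc τ (τ + δ))
    (hfast : deriv ξ τ > 2 * δ * (A + B)) :
    δ ≤ 4 * r₀ / (deriv ξ τ - 2 * δ * (A + B)) := by
  have hvel : ∀ t, HasDerivAt (fun s => x s 0 - ξ s) (deriv x t 0 - deriv ξ t) t := fun t =>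
    ((hxC2.differentiable two_ne_zero t).hasDerivAt.euclideanSpace_apply 0).sub
      (hξC2.differentiable two_ne_zero t).hasDerivAt
  have hacc : ∀ t, HasDerivAt (fun s => deriv x s 0 - deriv ξ s)
      (deriv (deriv x) t 0 - deriv (deriv ξ) t) t := fun t =>
    ((hxC2.differentiable_deriv_two t).hasDerivAt.euclideanSpace_apply 0).sub
      (hξC2.differentiable_deriv_two t).hasDerivAt
  have hacc_le : ∀ t ∈ Icc τ (τ + δ), deriv (deriv x) t 0 - deriv (deriv ξ) t ≤ A + B := by
    intro t ht
    have hx'' := (EuclideanSpace.abs_apply_le_norm (deriv (deriv x) t) 0).trans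
      (hODE t ▸ norm_central_force_le hB _)
    linarith [le_abs_self (deriv (deriv x) t 0), neg_le_abs (deriv (deriv ξ) t),
      hA t (hτ.trans ht.1)]
  have hpos : ∀ t ∈ Icc τ (τ + δ), |x t 0 - ξ t| ≤ r₀ := fun t ht =>
    (sub_body_apply_zero (x t) ξ t ▸ EuclideanSpace.abs_apply_le_norm _ 0).trans ((hcoll t).2 ht)
  have hτ_mem : τ ∈ Icc τ (τ + δ) := left_mem_Icc.2 (by linarith)
  have hτδ_mem : τ + δ ∈ Icc τ (τ + δ) := right_mem_Icc.2 (by linarith)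
  have htaylor := image_le_quadratic_of_deriv_deriv_le (fun t _ => hvel t) (fun t _ => hacc t)
    hacc_le (τ + δ) hτδ_mem
  simp only [hrest, PiLp.zero_apply, zero_sub, add_sub_cancel_left] at htaylor
  have hAB : 0 ≤ A + B := by
    linarith [(abs_nonneg _).trans_lt (hA τ hτ), (abs_nonneg _).trans (hB 0)]
  rw [le_div_iff₀ (by linarith)]
  nlinarith [mul_nonneg hAB (sq_nonneg δ), abs_le.1 (hpos τ hτ_mem),
    abs_le.1 (hpos (τ + δ) hτδ_mem)]

/-- the implicit bound on the collision duration. -/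
theorem collision_duration_implicit_bound
    (ξ : ℝ → ℝ) (x : ℝ → EuclideanSpace ℝ (Fin 3)) (Ψ : ℝ → ℝ)
    (v₀ A B r₀ τ δ : ℝ)
    (hr₀ : 0 < r₀) (hδ : 0 < δ) (hτ : 0 ≤ τ) (hv₀ : 0 < v₀)
    (hξC2 : ContDiff ℝ 2 ξ) (hxC2 : ContDiff ℝ 2 x)
    (hΨC1 : ContDiff ℝ 1 Ψ)
    (hξ0 : ξ 0 = 0) (hξ'0 : deriv ξ 0 = v₀)
    (hA : ∀ t ≥ (0:ℝ), |deriv (deriv ξ) t| < A)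
    (hhalf : ∀ t ≥ (0:ℝ), deriv ξ t > v₀ / 2)
    (hΨsupp : ∀ r > r₀, Ψ r = 0)
    (hB : ∀ r, |deriv Ψ r| ≤ B)
    (hODE : ∀ t, deriv (deriv x) t =
      -(deriv Ψ (‖x t - body ξ t‖) / ‖x t - body ξ t‖) • (x t - body ξ t))
    (hrest : deriv x τ = 0)
    (hcoll : ∀ t, ‖x t - body ξ t‖ ≤ r₀ ↔ t ∈ Icc τ (τ + δ))
    (hfast : deriv ξ τ > 2 * δ * (A + B)) :
    δ ≤ 4 * r₀ / (deriv ξ τ - 2 * δ * (A + B)) :=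
  collision_duration_implicit_bound_general ξ x Ψ A B r₀ τ δ hδ hτ hξC2 hxC2 hA hB hODE hrest hcoll
    hfast
end

section
/- Suppose a fluid particle with impact parameter σ collides with the body at time t₁ with body speed w₁ = ξ'(t₁), gains transverse velocity δv⊥ ≥ c σ w₁ (for a constant c > 0), acquires longitudinal velocity ≈ 2w₁, and the body (accelerating with acceleration a = E/M) recollides with it after time Δt = 2w₁/a. A second collision is only possible if the transverse displacement δv⊥ · Δt ≤ r₀, which forces σ ≤ (a r₀)/(2c) · w₁^{-2}; i.e. σ ≲ C w₁^{-2}. -/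
/-- the impact parameter of a particle that recollides with the
accelerating body must satisfy `σ ≤ (a r₀ / (2c)) w₁⁻²`. -/
theorem second_collision_impact_parameter
    (c a r₀ σ w₁ dv : ℝ)
    (hc : 0 < c) (ha : 0 < a) (hr₀ : 0 < r₀) (hσ : 0 < σ) (hw₁ : 0 < w₁)
    (hkick : dv ≥ c * σ * w₁)
    (hrecoll : dv * (2 * w₁ / a) ≤ r₀) :
    σ ≤ a * r₀ / (2 * c) / w₁ ^ 2 := by
  rw [div_div, le_div_iff₀ (by positivity)]
  have h : c * σ * w₁ * (2 * w₁ / a) ≤ r₀ :=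
    le_trans (mul_le_mul_of_nonneg_right hkick (by positivity)) hrecoll
  rw [show c * σ * w₁ * (2 * w₁ / a) = c * σ * w₁ * (2 * w₁) / a by ring, div_le_iff₀ ha] at h
  nlinarith [h]
end
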